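/- Let T: ℝⁿ ⇉ ℝⁿ be a monotone linear relation. Then: (a) the linear relation T₁ with graph gra T₁ = gra T + ({0} × (dom T)^⊥) is maximally monotone and dom T₁ = dom T; and (b) the linear relation T₂ with graph gra T₂ = gra T + ((ran T)^⊥ × {0}) is maximally monotone, gra T ⊆ gra T₂, and ran T₂ = ran T. -/

import Mathlib

/-!
For a linear relation, monotonicity is `0 ≤ ⟪x, x*⟫` on the graph, and adding `{0} × (dom T)^⊥`
preserves it since `x ⟂ (dom T)^⊥`. For maximality, let `(x, y)` be monotonically related to `T₁`.
Testing against `(0, t w)`, `w ∈ (dom T)^⊥`, gives `0 ≤ ⟪x, y⟫ - t ⟪x, w⟫` for all `t`, so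
`x ∈ (dom T)^⊥⊥ = dom T`, say `(x, u) ∈ T`. Testing against `(x, u) + t a`, `a ∈ T`, gives
`0 ≤ t² ⟪a₁, a₂⟫ - t ⟪a₁, y - u⟫` for all `t`, so `y - u ∈ (dom T)^⊥` and `(x, y) ∈ T₁`.
Part (b) is part (a) for `T⁻¹`, since `dom T⁻¹ = ran T` and `T₂ = (T⁻¹ + N_{ran T})⁻¹`.
-/

open Matrix Pointwise

/-- Sum of the eigenspaces of `M + Mᵀ` corresponding to positive eigenvalues. -/
noncomputable def Vpos {m : ℕ} (M : Matrix (Fin m) (Fin m) ℝ) :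
    Submodule ℝ (Fin m → ℝ) :=
  ⨆ μ : {t : ℝ // 0 < t}, Module.End.eigenspace (Matrix.mulVecLin (M + Mᵀ)) (μ : ℝ)

/-- Eigenspace of `M + Mᵀ` for the eigenvalue `0`. -/
noncomputable def Vzero {m : ℕ} (M : Matrix (Fin m) (Fin m) ℝ) :
    Submodule ℝ (Fin m → ℝ) :=
  Module.End.eigenspace (Matrix.mulVecLin (M + Mᵀ)) 0

/-- Sum of the eigenspaces of `M + Mᵀ` corresponding to negative eigenvalues. -/
noncomputable def Vneg {m : ℕ} (M : Matrix (Fin m) (Fin m) ℝ) :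
    Submodule ℝ (Fin m → ℝ) :=
  ⨆ μ : {t : ℝ // t < 0}, Module.End.eigenspace (Matrix.mulVecLin (M + Mᵀ)) (μ : ℝ)

/-- A set `S ⊆ ℝⁿ × ℝⁿ` is monotone. -/
def IsMonotoneSet {n : ℕ} (S : Set ((Fin n → ℝ) × (Fin n → ℝ))) : Prop :=
  ∀ a ∈ S, ∀ b ∈ S, 0 ≤ (a.1 - b.1) ⬝ᵥ (a.2 - b.2)

/-- A set `S ⊆ ℝⁿ × ℝⁿ` is maximally monotone. -/
def IsMaxMonotoneSet {n : ℕ} (S : Set ((Fin n → ℝ) × (Fin n → ℝ))) : Prop :=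
  IsMonotoneSet S ∧ ∀ a, (∀ b ∈ S, 0 ≤ (a.1 - b.1) ⬝ᵥ (a.2 - b.2)) → a ∈ S

/-- Graph of the adjoint relation: `(x, x*) ∈ gra T*` iff `(x*, -x) ⟂ gra T`. -/
def adjGraph {n : ℕ} (S : Set ((Fin n → ℝ) × (Fin n → ℝ))) :
    Set ((Fin n → ℝ) × (Fin n → ℝ)) :=
  {q | ∀ s ∈ S, q.2 ⬝ᵥ s.1 - q.1 ⬝ᵥ s.2 = 0}

/-- Domain of a relation given by its graph. -/
def domSet {n : ℕ} (S : Set ((Fin n → ℝ) × (Fin n → ℝ))) : Set (Fin n → ℝ) :=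
  {x | ∃ y, (x, y) ∈ S}

/-- Range of a relation given by its graph. -/
def ranSet {n : ℕ} (S : Set ((Fin n → ℝ) × (Fin n → ℝ))) : Set (Fin n → ℝ) :=
  {y | ∃ x, (x, y) ∈ S}

/-- Orthogonal complement of a subset of `ℝⁿ`. -/
def perpSet {n : ℕ} (C : Set (Fin n → ℝ)) : Set (Fin n → ℝ) :=
  {w | ∀ x ∈ C, w ⬝ᵥ x = 0}

theorem eq_zero_of_forall_nonneg_sub_mul {b c : ℝ} (h : ∀ t : ℝ, 0 ≤ c - t * b) : b = 0 := by
  by_contra hb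
  have := h ((c + 1) / b)
  rw [div_mul_cancel₀ _ hb] at this
  linarith

theorem eq_zero_of_forall_nonneg_sq_mul_sub_mul {c d : ℝ} (h : ∀ t : ℝ, 0 ≤ t ^ 2 * d - t * c) :
    c = 0 := by
  by_contra hc
  -- at `t = s c` the hypothesis reads `0 ≤ s c² (s d - 1)`, and `s d < 1`
  set s := 1 / (|d| + 1)
  have hs : 0 < s := by positivity
  have hsd : s * d < 1 := by
    rw [div_mul_eq_mul_div, one_mul, div_lt_one (by positivity)]
    linarith [le_abs_self d]
  have := h (s * c)
  nlinarith [sq_nonneg c, mul_pos hs (sq_pos_of_ne_zero hc)]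

section

variable {n : ℕ}

def perpSubmodule (C : Set (Fin n → ℝ)) : Submodule ℝ (Fin n → ℝ) where
  carrier := perpSet C
  add_mem' ha hb x hx := by rw [add_dotProduct, ha x hx, hb x hx, add_zero]
  zero_mem' x _ := zero_dotProduct x
  smul_mem' c w hw x hx := by rw [smul_dotProduct, hw x hx, smul_zero]

@[simp]
theorem mem_perpSubmodule {C : Set (Fin n → ℝ)} {w : Fin n → ℝ} :
    w ∈ perpSubmodule C ↔ w ∈ perpSet C :=
  Iff.rfl

theorem perpSet_perpSet_subset (D : Submodule ℝ (Fin n → ℝ)) :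
    perpSet (perpSet (D : Set (Fin n → ℝ))) ⊆ D := by
  intro x hx
  let K := D.comap (WithLp.linearEquiv 2 ℝ (Fin n → ℝ)).toLinearMap
  have hKperp : ∀ w ∈ Kᗮ, WithLp.ofLp w ∈ perpSet (D : Set (Fin n → ℝ)) := fun w hw d hd =>
    (Submodule.mem_orthogonal K w).1 hw (WithLp.toLp 2 d) hd
  have hx' : WithLp.toLp 2 x ∈ Kᗮᗮ :=
    (Submodule.mem_orthogonal _ _).2 fun w hw => hx _ (hKperp w hw)
  rwa [Submodule.orthogonal_orthogonal] at hx'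

theorem domSet_coe_eq_map_fst (T : Submodule ℝ ((Fin n → ℝ) × (Fin n → ℝ))) :
    domSet (T : Set ((Fin n → ℝ) × (Fin n → ℝ))) = T.map (LinearMap.fst ℝ _ _) := by
  ext x
  simp [domSet]

theorem fst_mem_domSet {T : Submodule ℝ ((Fin n → ℝ) × (Fin n → ℝ))}
    {u : (Fin n → ℝ) × (Fin n → ℝ)} (hu : u ∈ T) :
    u.1 ∈ domSet (T : Set ((Fin n → ℝ) × (Fin n → ℝ))) :=
  ⟨u.2, hu⟩

theorem isMonotoneSet_coe_iff (T : Submodule ℝ ((Fin n → ℝ) × (Fin n → ℝ))) :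
    IsMonotoneSet (T : Set ((Fin n → ℝ) × (Fin n → ℝ))) ↔ ∀ a ∈ T, 0 ≤ a.1 ⬝ᵥ a.2 :=
  ⟨fun h a ha => by simpa using h a ha 0 T.zero_mem,
    fun h a ha b hb => h (a - b) (T.sub_mem ha hb)⟩

def MonotonicallyRelated (a : (Fin n → ℝ) × (Fin n → ℝ))
    (S : Set ((Fin n → ℝ) × (Fin n → ℝ))) : Prop :=
  ∀ b ∈ S, 0 ≤ (a.1 - b.1) ⬝ᵥ (a.2 - b.2)

namespace MonotonicallyRelated

variable {q : (Fin n → ℝ) × (Fin n → ℝ)}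

theorem mono {S S' : Set ((Fin n → ℝ) × (Fin n → ℝ))} (h : MonotonicallyRelated q S)
    (hS : S' ⊆ S) : MonotonicallyRelated q S' :=
  fun b hb => h b (hS hb)

theorem fst_mem_perpSet {W : Submodule ℝ (Fin n → ℝ)}
    (h : MonotonicallyRelated q ((⊥ : Submodule ℝ (Fin n → ℝ)).prod W)) :
    q.1 ∈ perpSet (W : Set (Fin n → ℝ)) := by
  intro w hw
  refine eq_zero_of_forall_nonneg_sub_mul (c := q.1 ⬝ᵥ q.2) fun t => ?_
  simpa [dotProduct_sub, dotProduct_smul] using h (0, t • w) ⟨rfl, W.smul_mem t hw⟩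

theorem dotProduct_sub_snd_eq_zero {S : Submodule ℝ ((Fin n → ℝ) × (Fin n → ℝ))}
    {p a : (Fin n → ℝ) × (Fin n → ℝ)} (h : MonotonicallyRelated q S) (hp : p ∈ S)
    (hpq : p.1 = q.1) (ha : a ∈ S) : a.1 ⬝ᵥ (q.2 - p.2) = 0 := by
  refine eq_zero_of_forall_nonneg_sq_mul_sub_mul (d := a.1 ⬝ᵥ a.2) fun t => ?_
  have key := h (p + t • a) (S.add_mem hp (S.smul_mem t ha))
  rw [← hpq] at key
  convert key using 1
  simp only [Prod.fst_add, Prod.snd_add, Prod.smul_fst, Prod.smul_snd, sub_add_eq_sub_sub,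
    sub_self, zero_sub, neg_dotProduct, dotProduct_sub, smul_dotProduct, dotProduct_smul,
    smul_eq_mul]
  ring

end MonotonicallyRelated

variable {S : Set ((Fin n → ℝ) × (Fin n → ℝ))}

theorem IsMonotoneSet.preimage_swap (h : IsMonotoneSet S) : IsMonotoneSet (Prod.swap ⁻¹' S) :=
  fun a ha b hb => by
    rw [dotProduct_comm]
    exact h _ ha _ hb

theorem IsMaxMonotoneSet.preimage_swap (h : IsMaxMonotoneSet S) :
    IsMaxMonotoneSet (Prod.swap ⁻¹' S) :=
  ⟨h.1.preimage_swap, fun a ha => h.2 a.swap fun b hb => by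
    rw [dotProduct_comm]
    exact ha b.swap (by simpa using hb)⟩

theorem domSet_preimage_swap : domSet (Prod.swap ⁻¹' S) = ranSet S :=
  rfl

theorem ranSet_preimage_swap : ranSet (Prod.swap ⁻¹' S) = domSet S :=
  rfl

end

namespace LinearRelation

variable {n : ℕ}

def addNormalDom (T : Submodule ℝ ((Fin n → ℝ) × (Fin n → ℝ))) :
    Submodule ℝ ((Fin n → ℝ) × (Fin n → ℝ)) :=
  T ⊔ (⊥ : Submodule ℝ (Fin n → ℝ)).prod
    (perpSubmodule (domSet (T : Set ((Fin n → ℝ) × (Fin n → ℝ)))))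

def inverse (T : Submodule ℝ ((Fin n → ℝ) × (Fin n → ℝ))) :
    Submodule ℝ ((Fin n → ℝ) × (Fin n → ℝ)) :=
  T.comap (LinearEquiv.prodComm ℝ (Fin n → ℝ) (Fin n → ℝ)).toLinearMap

variable {T : Submodule ℝ ((Fin n → ℝ) × (Fin n → ℝ))}

theorem coe_inverse : (inverse T : Set ((Fin n → ℝ) × (Fin n → ℝ))) = Prod.swap ⁻¹' T :=
  rfl

theorem coe_addNormalDom :
    (addNormalDom T : Set ((Fin n → ℝ) × (Fin n → ℝ))) =
      T + {(0 : Fin n → ℝ)} ×ˢ perpSet (domSet (T : Set ((Fin n → ℝ) × (Fin n → ℝ)))) := by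
  rw [addNormalDom, Submodule.coe_sup, Submodule.prod_coe, Submodule.bot_coe]
  rfl

theorem mem_addNormalDom {p : (Fin n → ℝ) × (Fin n → ℝ)} :
    p ∈ addNormalDom T ↔ ∃ u ∈ T,
      ∃ w ∈ perpSet (domSet (T : Set ((Fin n → ℝ) × (Fin n → ℝ)))), (u.1, u.2 + w) = p := by
  simp [addNormalDom, Submodule.mem_sup, Submodule.mem_prod, Prod.ext_iff]

theorem le_addNormalDom : T ≤ addNormalDom T :=
  le_sup_left

theorem domSet_addNormalDom :
    domSet (addNormalDom T : Set ((Fin n → ℝ) × (Fin n → ℝ))) =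
      domSet (T : Set ((Fin n → ℝ) × (Fin n → ℝ))) := by
  ext x
  constructor
  · rintro ⟨y, hy⟩
    obtain ⟨u, hu, w, -, h⟩ := mem_addNormalDom.1 hy
    obtain ⟨rfl, -⟩ := Prod.mk.inj h
    exact fst_mem_domSet hu
  · rintro ⟨y, hy⟩
    exact ⟨y, le_addNormalDom hy⟩

theorem isMonotoneSet_addNormalDom (hT : IsMonotoneSet (T : Set ((Fin n → ℝ) × (Fin n → ℝ)))) :
    IsMonotoneSet (addNormalDom T : Set ((Fin n → ℝ) × (Fin n → ℝ))) := by
  rw [isMonotoneSet_coe_iff] at hT ⊢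
  intro a ha
  obtain ⟨u, hu, w, hw, rfl⟩ := mem_addNormalDom.1 ha
  have huw : u.1 ⬝ᵥ w = 0 := by
    rw [dotProduct_comm]
    exact hw _ (fst_mem_domSet hu)
  simpa [dotProduct_add, huw] using hT u hu

theorem isMaxMonotoneSet_addNormalDom
    (hT : IsMonotoneSet (T : Set ((Fin n → ℝ) × (Fin n → ℝ)))) :
    IsMaxMonotoneSet (addNormalDom T : Set ((Fin n → ℝ) × (Fin n → ℝ))) := by
  refine ⟨isMonotoneSet_addNormalDom hT, fun q (hq : MonotonicallyRelated q _) => ?_⟩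
  have hq₁ : q.1 ∈ domSet (T : Set ((Fin n → ℝ) × (Fin n → ℝ))) := by
    rw [domSet_coe_eq_map_fst]
    apply perpSet_perpSet_subset
    rw [← domSet_coe_eq_map_fst]
    exact (hq.mono (SetLike.coe_subset_coe.2 le_sup_right)).fst_mem_perpSet
  obtain ⟨y, hy⟩ := hq₁
  have hperp : q.2 - y ∈ perpSet (domSet (T : Set ((Fin n → ℝ) × (Fin n → ℝ)))) := by
    rintro x ⟨z, hz⟩
    rw [dotProduct_comm]
    exact (hq.mono (SetLike.coe_subset_coe.2 le_addNormalDom)).dotProduct_sub_snd_eq_zero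
      hy rfl hz
  exact mem_addNormalDom.2 ⟨_, hy, _, hperp, by simp⟩

theorem preimage_swap_addNormalDom_inverse :
    Prod.swap ⁻¹' (addNormalDom (inverse T) : Set ((Fin n → ℝ) × (Fin n → ℝ))) =
      T + perpSet (ranSet (T : Set ((Fin n → ℝ) × (Fin n → ℝ)))) ×ˢ {(0 : Fin n → ℝ)} := by
  ext ⟨x, y⟩
  rw [Set.mem_preimage, SetLike.mem_coe, mem_addNormalDom, coe_inverse, domSet_preimage_swap]
  simp [Set.mem_add, inverse, Prod.ext_iff]

end LinearRelation

open LinearRelation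

/-- for a monotone linear relation `T`:
(a) `T₁` with `gra T₁ = gra T + ({0} × (dom T)^⊥)` is maximally monotone and
`dom T₁ = dom T`; (b) `T₂` with `gra T₂ = gra T + ((ran T)^⊥ × {0})` is maximally
monotone, `gra T ⊆ gra T₂`, and `ran T₂ = ran T`. -/
theorem stmt18 {n : ℕ} (T : Submodule ℝ ((Fin n → ℝ) × (Fin n → ℝ)))
    (hmono : IsMonotoneSet (T : Set ((Fin n → ℝ) × (Fin n → ℝ)))) :
    (IsMaxMonotoneSet ((T : Set ((Fin n → ℝ) × (Fin n → ℝ))) +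
        ({(0 : Fin n → ℝ)} ×ˢ perpSet (domSet (T : Set ((Fin n → ℝ) × (Fin n → ℝ)))))) ∧
      domSet ((T : Set ((Fin n → ℝ) × (Fin n → ℝ))) +
          ({(0 : Fin n → ℝ)} ×ˢ perpSet (domSet (T : Set ((Fin n → ℝ) × (Fin n → ℝ)))))) =
        domSet (T : Set ((Fin n → ℝ) × (Fin n → ℝ)))) ∧
    (IsMaxMonotoneSet ((T : Set ((Fin n → ℝ) × (Fin n → ℝ))) +
        (perpSet (ranSet (T : Set ((Fin n → ℝ) × (Fin n → ℝ)))) ×ˢ {(0 : Fin n → ℝ)})) ∧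
      (T : Set ((Fin n → ℝ) × (Fin n → ℝ))) ⊆
        (T : Set ((Fin n → ℝ) × (Fin n → ℝ))) +
          (perpSet (ranSet (T : Set ((Fin n → ℝ) × (Fin n → ℝ)))) ×ˢ {(0 : Fin n → ℝ)}) ∧
      ranSet ((T : Set ((Fin n → ℝ) × (Fin n → ℝ))) +
          (perpSet (ranSet (T : Set ((Fin n → ℝ) × (Fin n → ℝ)))) ×ˢ {(0 : Fin n → ℝ)})) =
        ranSet (T : Set ((Fin n → ℝ) × (Fin n → ℝ)))) := by
  have hinv : IsMonotoneSet (inverse T : Set ((Fin n → ℝ) × (Fin n → ℝ))) :=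
    hmono.preimage_swap
  refine ⟨?_, ?_, fun p hp => ⟨p, hp, 0, ⟨fun _ _ => zero_dotProduct _, rfl⟩, add_zero p⟩, ?_⟩
  · rw [← coe_addNormalDom, domSet_addNormalDom]
    exact ⟨isMaxMonotoneSet_addNormalDom hmono, rfl⟩
  · rw [← preimage_swap_addNormalDom_inverse]
    exact (isMaxMonotoneSet_addNormalDom hinv).preimage_swap
  · rw [← preimage_swap_addNormalDom_inverse, ranSet_preimage_swap, domSet_addNormalDom,
      coe_inverse, domSet_preimage_swap]
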